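/- arXiv:1210.0795 — 2 statements merged into one kernel-verified Lean document; each statement's English description precedes it below -/
import Mathlib

section
/- Let σ be an admissible sequence with Boyd indices α_σ, β_σ. Then for every ε > 0 there exists a sequence τ equivalent to σ (i.e. 0 < C_1 ≤ σ_j/τ_j ≤ C_2 < ∞ for all j) satisfying 2^{β_σ − ε} τ_j ≤ τ_{j+1} ≤ 2^{α_σ + ε} τ_j for all j ∈ ℕ₀. -/
open Real

lemma stmt7_up (σ : ℕ → ℝ) (d1 : ℝ) (hd1 : 0 ≤ d1)
    (hup1 : ∀ j, σ (j + 1) ≤ d1 * σ j) : ∀ j k, σ (j + k) ≤ d1 ^ k * σ j := by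
  intro j k
  induction k with
  | zero => simp
  | succ k ih =>
    have h1 : j + (k + 1) = (j + k) + 1 := by ring
    rw [h1, pow_succ]
    calc σ ((j + k) + 1) ≤ d1 * σ (j + k) := hup1 _
      _ ≤ d1 * (d1 ^ k * σ j) := mul_le_mul_of_nonneg_left ih hd1
      _ = d1 ^ k * d1 * σ j := by ring

lemma stmt7_lo (σ : ℕ → ℝ) (d0 : ℝ) (hd0 : 0 ≤ d0)
    (hlo1 : ∀ j, d0 * σ j ≤ σ (j + 1)) : ∀ j k, d0 ^ k * σ j ≤ σ (j + k) := by
  intro j k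
  induction k with
  | zero => simp
  | succ k ih =>
    have h1 : j + (k + 1) = (j + k) + 1 := by ring
    rw [h1, pow_succ]
    calc d0 ^ k * d0 * σ j = d0 * (d0 ^ k * σ j) := by ring
      _ ≤ d0 * σ (j + k) := mul_le_mul_of_nonneg_left ih hd0
      _ ≤ σ ((j + k) + 1) := hlo1 _

/-- Claim A: upper growth estimate from the upper Boyd index. -/
lemma stmt7_A (σ : ℕ → ℝ) (hσ : ∀ j, 0 < σ j) (d0 d1 : ℝ)
    (hd0 : 0 < d0) (hd01 : d0 ≤ d1)
    (hadm : ∀ j, d0 * σ j ≤ σ (j + 1) ∧ σ (j + 1) ≤ d1 * σ j)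
    (α : ℝ) (hα : α = ⨅ j : ℕ, Real.logb 2 (⨆ k : ℕ, σ (j + 1 + k) / σ k) / (j + 1))
    (ε : ℝ) (hε : 0 < ε) :
    ∃ K > 0, ∀ j k : ℕ, σ (j + k) ≤ K * 2 ^ ((α + ε) * k) * σ j := by
  have h2 : (1:ℝ) < 2 := one_lt_two
  have hd1 : (0:ℝ) < d1 := lt_of_lt_of_le hd0 hd01
  have hup := stmt7_up σ d1 hd1.le (fun j => (hadm j).2)
  -- find a good index m'
  obtain ⟨m', hm'⟩ : ∃ m' : ℕ,
      Real.logb 2 (⨆ k : ℕ, σ (m' + 1 + k) / σ k) / (m' + 1) < α + ε / 2 := by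
    apply exists_lt_of_ciInf_lt
    rw [← hα]; linarith
  set m : ℕ := m' + 1 with hm
  set a : ℝ := α + ε / 2 with ha
  set S : ℝ := ⨆ k : ℕ, σ (m' + 1 + k) / σ k with hS
  have hbdd : BddAbove (Set.range fun k : ℕ => σ (m' + 1 + k) / σ k) := by
    refine ⟨d1 ^ (m' + 1), ?_⟩
    rintro x ⟨k, rfl⟩
    have := hup k (m' + 1)
    rw [div_le_iff₀ (hσ k), show m' + 1 + k = k + (m' + 1) by ring]
    linarith [this]
  have hSpos : 0 < S := by
    have h0 : σ (m' + 1 + 0) / σ 0 ≤ S := le_ciSup hbdd 0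
    have := div_pos (hσ (m' + 1 + 0)) (hσ 0)
    linarith
  have hmpos : (0:ℝ) < (m : ℝ) := by positivity
  have hSM : S < 2 ^ (a * m) := by
    rw [← Real.logb_lt_iff_lt_rpow h2 hSpos]
    have := (div_lt_iff₀ (show (0:ℝ) < (m' : ℝ) + 1 by positivity)).mp hm'
    have hc : ((m':ℝ) + 1) = (m : ℝ) := by push_cast [hm]; ring
    rw [hc] at this
    linarith [this]
  set M : ℝ := 2 ^ (a * m) with hM
  have hMpos : 0 < M := Real.rpow_pos_of_pos two_pos _
  have hstep : ∀ x, σ (x + m) ≤ M * σ x := by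
    intro x
    have h1 : σ (m' + 1 + x) / σ x ≤ S := le_ciSup hbdd x
    have h2' : σ (m' + 1 + x) ≤ M * σ x := by
      rw [div_le_iff₀ (hσ x)] at h1
      nlinarith [hσ x]
    rwa [show m' + 1 + x = x + m by omega] at h2'
  have hiter : ∀ q j, σ (j + q * m) ≤ M ^ q * σ j := by
    intro q
    induction q with
    | zero => intro j; simp
    | succ q ih =>
      intro j
      rw [show j + (q + 1) * m = (j + q * m) + m by ring, pow_succ]
      calc σ ((j + q * m) + m) ≤ M * σ (j + q * m) := hstep _
        _ ≤ M * (M ^ q * σ j) := mul_le_mul_of_nonneg_left (ih j) hMpos.le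
        _ = M ^ q * M * σ j := by ring
  set D : ℝ := max d1 1 with hD
  have hD1 : (1:ℝ) ≤ D := le_max_right _ _
  refine ⟨2 ^ (|a| * m) * D ^ m, by positivity, ?_⟩
  intro j k
  set q : ℕ := k / m with hq
  set r : ℕ := k % m with hr
  have hkqr : m * q + r = k := Nat.div_add_mod k m
  have hrm : r ≤ m := le_of_lt (Nat.mod_lt _ (Nat.succ_pos m'))
  have h1 : σ (j + k) ≤ M ^ q * σ (j + r) := by
    rw [show j + k = (j + r) + q * m from by rw [← hkqr]; ring]
    exact hiter q (j + r)
  have h2' : σ (j + r) ≤ D ^ m * σ j := by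
    calc σ (j + r) ≤ d1 ^ r * σ j := hup j r
      _ ≤ D ^ r * σ j :=
        mul_le_mul_of_nonneg_right (pow_le_pow_left₀ hd1.le (le_max_left _ _) r) (hσ j).le
      _ ≤ D ^ m * σ j :=
        mul_le_mul_of_nonneg_right (pow_le_pow_right₀ hD1 hrm) (hσ j).le
  have hMq : M ^ q = 2 ^ (a * m * q) := by
    rw [hM, ← Real.rpow_natCast (2 ^ (a * (m:ℝ)) : ℝ) q, ← Real.rpow_mul (by norm_num)]
  have hexp : a * m * q ≤ (α + ε) * k + |a| * m := by
    clear_value a m S M D q r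
    have hk0 : (0:ℝ) ≤ (k : ℝ) := Nat.cast_nonneg k
    have hqm : (q:ℝ) * m ≤ (k:ℝ) := by
      have h : q * m ≤ k := by rw [hq]; exact Nat.div_mul_le_self k m
      exact_mod_cast h
    have hkqm : (k:ℝ) ≤ (q:ℝ) * m + m := by
      have h : k ≤ q * m + m := by
        calc k = m * q + r := hkqr.symm
          _ ≤ m * q + m := Nat.add_le_add_left hrm _
          _ = q * m + m := by ring
      exact_mod_cast h
    have hm0 : (0:ℝ) ≤ (m:ℝ) := Nat.cast_nonneg m
    have haε : α + ε = a + ε / 2 := by rw [ha]; ring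
    have hεk : 0 ≤ ε / 2 * k := by positivity
    rcases le_or_gt 0 a with hsign | hsign
    · rw [haε, abs_of_nonneg hsign]
      nlinarith [mul_le_mul_of_nonneg_left hqm hsign, mul_nonneg hsign hm0]
    · rw [haε, abs_of_neg hsign]
      nlinarith [mul_le_mul_of_nonneg_left hkqm (neg_nonneg.mpr hsign.le), hεk]
  have h3 : M ^ q ≤ 2 ^ ((α + ε) * k) * 2 ^ (|a| * m) := by
    rw [hMq, ← Real.rpow_add two_pos]
    exact Real.rpow_le_rpow_of_exponent_le h2.le hexp
  calc σ (j + k) ≤ M ^ q * σ (j + r) := h1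
    _ ≤ M ^ q * (D ^ m * σ j) := mul_le_mul_of_nonneg_left h2' (by positivity)
    _ ≤ (2 ^ ((α + ε) * k) * 2 ^ (|a| * m)) * (D ^ m * σ j) :=
        mul_le_mul_of_nonneg_right h3 (mul_nonneg (by positivity) (hσ j).le)
    _ = 2 ^ (|a| * m) * D ^ m * 2 ^ ((α + ε) * k) * σ j := by ring

/-- Claim B: lower growth estimate from the lower Boyd index. -/
lemma stmt7_B (σ : ℕ → ℝ) (hσ : ∀ j, 0 < σ j) (d0 d1 : ℝ)
    (hd0 : 0 < d0) (hd01 : d0 ≤ d1)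
    (hadm : ∀ j, d0 * σ j ≤ σ (j + 1) ∧ σ (j + 1) ≤ d1 * σ j)
    (β : ℝ) (hβ : β = ⨆ j : ℕ, Real.logb 2 (⨅ k : ℕ, σ (j + 1 + k) / σ k) / (j + 1))
    (ε : ℝ) (hε : 0 < ε) :
    ∃ c > 0, ∀ j k : ℕ, c * 2 ^ ((β - ε) * k) * σ j ≤ σ (j + k) := by
  have h2 : (1:ℝ) < 2 := one_lt_two
  have hlo := stmt7_lo σ d0 hd0.le (fun j => (hadm j).1)
  obtain ⟨m', hm'⟩ : ∃ m' : ℕ,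
      β - ε / 2 < Real.logb 2 (⨅ k : ℕ, σ (m' + 1 + k) / σ k) / (m' + 1) := by
    apply exists_lt_of_lt_ciSup
    rw [← hβ]; linarith
  set m : ℕ := m' + 1 with hm
  set b : ℝ := β - ε / 2 with hb
  set S : ℝ := ⨅ k : ℕ, σ (m' + 1 + k) / σ k with hS
  have hbdd : BddBelow (Set.range fun k : ℕ => σ (m' + 1 + k) / σ k) := by
    refine ⟨d0 ^ (m' + 1), ?_⟩
    rintro x ⟨k, rfl⟩
    have := hlo k (m' + 1)
    rw [le_div_iff₀ (hσ k), show m' + 1 + k = k + (m' + 1) by ring]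
    linarith [this]
  have hSpos : 0 < S := by
    apply lt_of_lt_of_le (by positivity : (0:ℝ) < d0 ^ (m' + 1))
    apply le_ciInf
    intro k
    have := hlo k (m' + 1)
    rw [le_div_iff₀ (hσ k), show m' + 1 + k = k + (m' + 1) by ring]
    linarith [this]
  have hmpos : (0:ℝ) < (m : ℝ) := by positivity
  have hSM : 2 ^ (b * m) < S := by
    rw [← Real.lt_logb_iff_rpow_lt h2 hSpos]
    have := (lt_div_iff₀ (show (0:ℝ) < (m' : ℝ) + 1 by positivity)).mp hm'
    have hc : ((m':ℝ) + 1) = (m : ℝ) := by push_cast [hm]; ring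
    rw [hc] at this
    linarith [this]
  set M : ℝ := 2 ^ (b * m) with hM
  have hMpos : 0 < M := Real.rpow_pos_of_pos two_pos _
  have hstep : ∀ x, M * σ x ≤ σ (x + m) := by
    intro x
    have h1 : S ≤ σ (m' + 1 + x) / σ x := ciInf_le hbdd x
    have h2' : M * σ x ≤ σ (m' + 1 + x) := by
      rw [le_div_iff₀ (hσ x)] at h1
      nlinarith [hσ x]
    rwa [show m' + 1 + x = x + m by omega] at h2'
  have hiter : ∀ q j, M ^ q * σ j ≤ σ (j + q * m) := by
    intro q
    induction q with
    | zero => intro j; simp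
    | succ q ih =>
      intro j
      rw [show j + (q + 1) * m = (j + q * m) + m by ring, pow_succ]
      calc M ^ q * M * σ j = M * (M ^ q * σ j) := by ring
        _ ≤ M * σ (j + q * m) := mul_le_mul_of_nonneg_left (ih j) hMpos.le
        _ ≤ σ ((j + q * m) + m) := hstep _
  set D : ℝ := min d0 1 with hD
  have hD1 : D ≤ 1 := min_le_right _ _
  have hDpos : 0 < D := lt_min hd0 one_pos
  refine ⟨2 ^ (-(|b| * m)) * D ^ m, by positivity, ?_⟩
  intro j k
  set q : ℕ := k / m with hq
  set r : ℕ := k % m with hr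
  have hkqr : m * q + r = k := Nat.div_add_mod k m
  have hrm : r ≤ m := le_of_lt (Nat.mod_lt _ (Nat.succ_pos m'))
  have h1 : M ^ q * σ (j + r) ≤ σ (j + k) := by
    rw [show j + k = (j + r) + q * m from by rw [← hkqr]; ring]
    exact hiter q (j + r)
  have h2' : D ^ m * σ j ≤ σ (j + r) := by
    calc D ^ m * σ j ≤ D ^ r * σ j :=
        mul_le_mul_of_nonneg_right (pow_le_pow_of_le_one hDpos.le hD1 hrm) (hσ j).le
      _ ≤ d0 ^ r * σ j :=
        mul_le_mul_of_nonneg_right (pow_le_pow_left₀ hDpos.le (min_le_left _ _) r) (hσ j).le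
      _ ≤ σ (j + r) := hlo j r
  have hMq : M ^ q = 2 ^ (b * m * q) := by
    rw [hM, ← Real.rpow_natCast (2 ^ (b * (m:ℝ)) : ℝ) q, ← Real.rpow_mul (by norm_num)]
  have hexp : (β - ε) * k + -(|b| * m) ≤ b * m * q := by
    clear_value b m S M D q r
    have hk0 : (0:ℝ) ≤ (k : ℝ) := Nat.cast_nonneg k
    have hqm : (q:ℝ) * m ≤ (k:ℝ) := by
      have h : q * m ≤ k := by rw [hq]; exact Nat.div_mul_le_self k m
      exact_mod_cast h
    have hkqm : (k:ℝ) ≤ (q:ℝ) * m + m := by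
      have h : k ≤ q * m + m := by
        calc k = m * q + r := hkqr.symm
          _ ≤ m * q + m := Nat.add_le_add_left hrm _
          _ = q * m + m := by ring
      exact_mod_cast h
    have hm0 : (0:ℝ) ≤ (m:ℝ) := Nat.cast_nonneg m
    have hbε : β - ε = b - ε / 2 := by rw [hb]; ring
    have hεk : 0 ≤ ε / 2 * k := by positivity
    rcases le_or_gt 0 b with hsign | hsign
    · rw [hbε, abs_of_nonneg hsign]
      nlinarith [mul_le_mul_of_nonneg_left hkqm hsign, mul_nonneg hsign hm0]
    · rw [hbε, abs_of_neg hsign]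
      nlinarith [mul_le_mul_of_nonneg_left hqm (neg_nonneg.mpr hsign.le), hεk]
  have h3 : 2 ^ (-(|b| * m)) * 2 ^ ((β - ε) * k) ≤ M ^ q := by
    rw [hMq, ← Real.rpow_add two_pos]
    exact Real.rpow_le_rpow_of_exponent_le h2.le (by linarith [hexp])
  calc 2 ^ (-(|b| * m)) * D ^ m * 2 ^ ((β - ε) * k) * σ j
      = (2 ^ (-(|b| * m)) * 2 ^ ((β - ε) * k)) * (D ^ m * σ j) := by ring
    _ ≤ M ^ q * (D ^ m * σ j) :=
        mul_le_mul_of_nonneg_right h3 (mul_nonneg (by positivity) (hσ j).le)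
    _ ≤ M ^ q * σ (j + r) := mul_le_mul_of_nonneg_left h2' (by positivity)
    _ ≤ σ (j + k) := h1

/-- For every ε > 0 there is a sequence τ equivalent to σ with
2^{β_σ-ε} τ_j ≤ τ_{j+1} ≤ 2^{α_σ+ε} τ_j. -/
theorem stmt_7 (σ : ℕ → ℝ) (hσ : ∀ j, 0 < σ j) (d0 d1 : ℝ)
    (hd0 : 0 < d0) (hd01 : d0 ≤ d1)
    (hadm : ∀ j, d0 * σ j ≤ σ (j + 1) ∧ σ (j + 1) ≤ d1 * σ j)
    (α β : ℝ)
    (hα : α = ⨅ j : ℕ, Real.logb 2 (⨆ k : ℕ, σ (j + 1 + k) / σ k) / (j + 1))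
    (hβ : β = ⨆ j : ℕ, Real.logb 2 (⨅ k : ℕ, σ (j + 1 + k) / σ k) / (j + 1)) :
    ∀ ε > (0 : ℝ), ∃ τ : ℕ → ℝ, (∀ j, 0 < τ j) ∧
      (∃ C1 C2 : ℝ, 0 < C1 ∧ (∀ j, C1 ≤ σ j / τ j ∧ σ j / τ j ≤ C2)) ∧
      (∀ j : ℕ, (2 : ℝ) ^ (β - ε) * τ j ≤ τ (j + 1) ∧
        τ (j + 1) ≤ (2 : ℝ) ^ (α + ε) * τ j) := by
  intro ε hε
  obtain ⟨K, hK, hA⟩ := stmt7_A σ hσ d0 d1 hd0 hd01 hadm α hα (ε / 2) (by linarith)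
  obtain ⟨c, hc, hB⟩ := stmt7_B σ hσ d0 d1 hd0 hd01 hadm β hβ (ε / 2) (by linarith)
  -- the exponents we aim at
  set A : ℝ := α + ε with hAdef
  set B : ℝ := β - ε with hBdef
  have hAε : α + ε / 2 + ε / 2 = A := by rw [hAdef]; ring
  have hBε : β - ε / 2 - ε / 2 = B := by rw [hBdef]; ring
  -- first regularization: τ'
  set τ' : ℕ → ℝ := fun j => ⨆ k : ℕ, σ (j + k) * 2 ^ (-A * k) with hτ'
  have hterm_le : ∀ j k : ℕ, σ (j + k) * 2 ^ (-A * (k:ℝ)) ≤ K * σ j := by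
    intro j k
    have h1 : σ (j + k) ≤ K * 2 ^ ((α + ε / 2) * k) * σ j := hA j k
    have h3 : (2:ℝ) ^ ((α + ε / 2) * (k:ℝ)) * 2 ^ (-A * (k:ℝ)) = 2 ^ (-(ε / 2) * (k:ℝ)) := by
      rw [← Real.rpow_add two_pos]; congr 1; rw [hAdef]; ring
    have h4 : (2:ℝ) ^ (-(ε / 2) * (k:ℝ)) ≤ 1 := by
      apply Real.rpow_le_one_of_one_le_of_nonpos one_le_two
      have : (0:ℝ) ≤ ε / 2 * k := by positivity
      linarith
    calc σ (j + k) * 2 ^ (-A * (k:ℝ))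
        ≤ (K * 2 ^ ((α + ε / 2) * k) * σ j) * 2 ^ (-A * (k:ℝ)) :=
          mul_le_mul_of_nonneg_right h1 (Real.rpow_nonneg (by norm_num) _)
      _ = (K * σ j) * ((2:ℝ) ^ ((α + ε / 2) * (k:ℝ)) * 2 ^ (-A * (k:ℝ))) := by ring
      _ = (K * σ j) * 2 ^ (-(ε / 2) * (k:ℝ)) := by rw [h3]
      _ ≤ (K * σ j) * 1 := by
          apply mul_le_mul_of_nonneg_left h4 (mul_nonneg hK.le (hσ j).le)
      _ = K * σ j := mul_one _
  have hbddA : ∀ j : ℕ, BddAbove (Set.range fun k : ℕ => σ (j + k) * 2 ^ (-A * (k:ℝ))) := by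
    intro j
    exact ⟨K * σ j, by rintro x ⟨k, rfl⟩; exact hterm_le j k⟩
  have hτ'lb : ∀ j, σ j ≤ τ' j := by
    intro j
    have h := le_ciSup (hbddA j) 0
    have e : σ (j + 0) * 2 ^ (-A * ((0:ℕ):ℝ)) = σ j := by norm_num
    rwa [e] at h
  have hτ'ub : ∀ j, τ' j ≤ K * σ j := fun j => ciSup_le (hterm_le j)
  have hτ'pos : ∀ j, 0 < τ' j := fun j => lt_of_lt_of_le (hσ j) (hτ'lb j)
  have hτ'grow : ∀ j, τ' (j + 1) ≤ 2 ^ A * τ' j := by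
    intro j
    apply ciSup_le
    intro k
    have e : (2:ℝ) ^ A * 2 ^ (-A * ((k:ℝ) + 1)) = 2 ^ (-A * (k:ℝ)) := by
      rw [← Real.rpow_add two_pos]; congr 1; ring
    have h1 : σ (j + (k + 1)) * 2 ^ (-A * ((k:ℝ) + 1)) ≤ τ' j := by
      have h := le_ciSup (hbddA j) (k + 1)
      have e : (((k + 1 : ℕ)):ℝ) = (k:ℝ) + 1 := by push_cast; ring
      rwa [e] at h
    calc σ (j + 1 + k) * 2 ^ (-A * (k:ℝ))
        = σ (j + (k + 1)) * ((2:ℝ) ^ A * 2 ^ (-A * ((k:ℝ) + 1))) := by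
          rw [e, show j + 1 + k = j + (k + 1) by ring]
      _ = (2:ℝ) ^ A * (σ (j + (k + 1)) * 2 ^ (-A * ((k:ℝ) + 1))) := by ring
      _ ≤ 2 ^ A * τ' j :=
          mul_le_mul_of_nonneg_left h1 (Real.rpow_nonneg (by norm_num) _)
  -- second regularization: τ
  set τ : ℕ → ℝ := fun j => ⨅ k : ℕ, τ' (j + k) * 2 ^ (-B * k) with hτ
  have hterm_ge : ∀ j k : ℕ, c * σ j ≤ τ' (j + k) * 2 ^ (-B * (k:ℝ)) := by
    intro j k
    have h1 : c * 2 ^ ((β - ε / 2) * k) * σ j ≤ σ (j + k) := hB j k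
    have h3 : (2:ℝ) ^ ((β - ε / 2) * (k:ℝ)) * 2 ^ (-B * (k:ℝ)) = 2 ^ ((ε / 2) * (k:ℝ)) := by
      rw [← Real.rpow_add two_pos]; congr 1; rw [hBdef]; ring
    have h4 : (1:ℝ) ≤ (2:ℝ) ^ ((ε / 2) * (k:ℝ)) := by
      have h := Real.rpow_le_rpow_of_exponent_le one_le_two
        (show (0:ℝ) ≤ ε / 2 * k by positivity)
      rwa [Real.rpow_zero] at h
    calc c * σ j = (c * σ j) * 1 := (mul_one _).symm
      _ ≤ (c * σ j) * 2 ^ ((ε / 2) * (k:ℝ)) :=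
          mul_le_mul_of_nonneg_left h4 (mul_nonneg hc.le (hσ j).le)
      _ = (c * 2 ^ ((β - ε / 2) * (k:ℝ)) * σ j) * 2 ^ (-B * (k:ℝ)) := by
          rw [← h3]; ring
      _ ≤ σ (j + k) * 2 ^ (-B * (k:ℝ)) :=
          mul_le_mul_of_nonneg_right h1 (Real.rpow_nonneg (by norm_num) _)
      _ ≤ τ' (j + k) * 2 ^ (-B * (k:ℝ)) :=
          mul_le_mul_of_nonneg_right (hτ'lb _) (Real.rpow_nonneg (by norm_num) _)
  have hbddB : ∀ j : ℕ, BddBelow (Set.range fun k : ℕ => τ' (j + k) * 2 ^ (-B * (k:ℝ))) := by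
    intro j
    exact ⟨c * σ j, by rintro x ⟨k, rfl⟩; exact hterm_ge j k⟩
  have hτlb : ∀ j, c * σ j ≤ τ j := fun j => le_ciInf (hterm_ge j)
  have hτub : ∀ j, τ j ≤ τ' j := by
    intro j
    have h := ciInf_le (hbddB j) 0
    have e : τ' (j + 0) * 2 ^ (-B * ((0:ℕ):ℝ)) = τ' j := by norm_num
    rwa [e] at h
  have hτpos : ∀ j, 0 < τ j := fun j => lt_of_lt_of_le (mul_pos hc (hσ j)) (hτlb j)
  refine ⟨τ, hτpos, ⟨1 / K, 1 / c, by positivity, ?_⟩, ?_⟩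
  · intro j
    constructor
    · rw [le_div_iff₀ (hτpos j), div_mul_eq_mul_div, div_le_iff₀ hK, one_mul]
      calc τ j ≤ τ' j := hτub j
        _ ≤ K * σ j := hτ'ub j
        _ = σ j * K := mul_comm _ _
    · rw [div_le_div_iff₀ (hτpos j) hc, one_mul]
      calc σ j * c = c * σ j := mul_comm _ _
        _ ≤ τ j := hτlb j
  · intro j
    constructor
    · -- lower growth
      apply le_ciInf
      intro k
      have h1 : τ j ≤ τ' (j + (k + 1)) * 2 ^ (-B * ((k:ℝ) + 1)) := by
        have h := ciInf_le (hbddB j) (k + 1)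
        have e : (((k + 1 : ℕ)):ℝ) = (k:ℝ) + 1 := by push_cast; ring
        rwa [e] at h
      have e : (2:ℝ) ^ B * 2 ^ (-B * ((k:ℝ) + 1)) = 2 ^ (-B * (k:ℝ)) := by
        rw [← Real.rpow_add two_pos]; congr 1; ring
      calc (2:ℝ) ^ B * τ j ≤ 2 ^ B * (τ' (j + (k + 1)) * 2 ^ (-B * ((k:ℝ) + 1))) :=
            mul_le_mul_of_nonneg_left h1 (Real.rpow_nonneg (by norm_num) _)
        _ = τ' (j + 1 + k) * 2 ^ (-B * (k:ℝ)) := by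
            rw [show j + 1 + k = j + (k + 1) by ring, ← e]; ring
    · -- upper growth
      have key : τ (j + 1) * 2 ^ (-A) ≤ τ j := by
        apply le_ciInf
        intro k
        have h1 : τ (j + 1) ≤ τ' (j + 1 + k) * 2 ^ (-B * (k:ℝ)) := ciInf_le (hbddB (j + 1)) k
        have h2 : τ' (j + 1 + k) ≤ 2 ^ A * τ' (j + k) := by
          have := hτ'grow (j + k)
          rwa [show j + 1 + k = (j + k) + 1 by ring]
        have h3 : τ (j + 1) ≤ 2 ^ A * τ' (j + k) * 2 ^ (-B * (k:ℝ)) := by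
          calc τ (j + 1) ≤ τ' (j + 1 + k) * 2 ^ (-B * (k:ℝ)) := h1
            _ ≤ 2 ^ A * τ' (j + k) * 2 ^ (-B * (k:ℝ)) :=
              mul_le_mul_of_nonneg_right h2 (Real.rpow_nonneg (by norm_num) _)
        have e : (2:ℝ) ^ (-A) * 2 ^ A = 1 := by
          rw [← Real.rpow_add two_pos]; simp
        calc τ (j + 1) * 2 ^ (-A)
            ≤ (2 ^ A * τ' (j + k) * 2 ^ (-B * (k:ℝ))) * 2 ^ (-A) :=
              mul_le_mul_of_nonneg_right h3 (Real.rpow_nonneg (by norm_num) _)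
          _ = (τ' (j + k) * 2 ^ (-B * (k:ℝ))) * ((2:ℝ) ^ (-A) * 2 ^ A) := by ring
          _ = τ' (j + k) * 2 ^ (-B * (k:ℝ)) := by rw [e, mul_one]
      have e : (2:ℝ) ^ (-A) * 2 ^ A = 1 := by
        rw [← Real.rpow_add two_pos]; simp
      have hApos : (0:ℝ) < 2 ^ A := Real.rpow_pos_of_pos two_pos _
      calc τ (j + 1) = (τ (j + 1) * 2 ^ (-A)) * 2 ^ A := by
            rw [mul_assoc, e, mul_one]
        _ ≤ τ j * 2 ^ A := mul_le_mul_of_nonneg_right key hApos.le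
        _ = 2 ^ A * τ j := mul_comm _ _
end

section
/- Let σ be an admissible sequence, N = (N_j) satisfy λ_0 N_j ≤ N_{j+1} ≤ λ_1 N_j with 1 < λ_0 ≤ λ_1, κ_0 ∈ ℕ with λ_0^{κ_0} ≥ 2, and k(j) := min{k ∈ ℕ₀ : 2^{j−1} ≤ N_{k+κ_0}}. Let 0 < r < ∞. Then ∑_{j=0}^∞ σ_j^{−r} < ∞ if and only if ∑_{j=0}^∞ σ_{k(j)}^{−r} < ∞. -/
/-!
With `M m = 2 * N (m + κ0)`, `k j` is the least `m` with `2 ^ j ≤ M m`. Since `M` at least doubles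
over `κ0` steps, `k (j + 1) ≤ k j + κ0`: every `m ≥ k 0` lies less than `κ0` steps past some
`k j`, and over fewer than `κ0` steps `σ ^ (-r)` grows by at most a fixed factor. Since `M` grows
by at most `λ1` per step, `k` increases strictly every `c` steps for some `c`, so each value of `k`
is taken at most `c` times. Both implications then follow from the fact that composing a
nonnegative summable sequence with a map whose fibres have bounded size keeps it summable.
-/

open Finset in
theorem Summable.comp_of_encard_preimage_le {α β : Type*} {f : β → ℝ} (hf : 0 ≤ f)
    (hsum : Summable f) {g : α → β} {c : ℕ} (hg : ∀ b, (g ⁻¹' {b}).encard ≤ c) :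
    Summable (f ∘ g) := by
  classical
  refine summable_of_sum_le (c := c * ∑' b, f b) (fun a => hf (g a)) fun u => ?_
  have hfiber : ∀ b, #{a ∈ u | g a = b} ≤ c := fun b => by
    have : ((({a ∈ u | g a = b} : Finset α)) : Set α) ⊆ g ⁻¹' {b} := fun a ha => by
      simp_all
    exact_mod_cast (Set.encard_coe_eq_coe_finsetCard _).symm.trans_le
      ((Set.encard_le_encard this).trans (hg b))
  calc ∑ a ∈ u, f (g a) = ∑ b ∈ u.image g, #{a ∈ u | g a = b} • f b := sum_comp f g
    _ ≤ ∑ b ∈ u.image g, c * f b := sum_le_sum fun b _ => by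
        rw [nsmul_eq_mul]; gcongr; exacts [hf b, hfiber b]
    _ = c * ∑ b ∈ u.image g, f b := (mul_sum ..).symm
    _ ≤ c * ∑' b, f b := by gcongr; exact hsum.sum_le_tsum _ fun b _ => hf b

theorem Set.encard_le_of_subset_Ico {s : Set ℕ} {a c : ℕ} (h : s ⊆ Set.Ico a (a + c)) :
    s.encard ≤ c := by
  refine (Set.encard_le_encard h).trans ?_
  rw [← Finset.coe_Ico, Set.encard_coe_eq_coe_finsetCard]
  simp

theorem Monotone.encard_preimage_singleton_le {β : Type*} [Preorder β] {g : ℕ → β}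
    (hg : Monotone g) {c : ℕ} (hc : ∀ j, g j < g (j + c)) (b : β) :
    (g ⁻¹' {b}).encard ≤ c := by
  classical
  by_cases hb : ∃ j, g j = b
  · refine Set.encard_le_of_subset_Ico (a := Nat.find hb) fun j (hj : g j = b) =>
      ⟨Nat.find_min' hb hj, ?_⟩
    by_contra! hle
    exact (hc _).not_ge ((hg hle).trans_eq (hj.trans (Nat.find_spec hb).symm))
  · simp [Set.preimage, not_exists.1 hb]

theorem pow_mul_le_of_mul_le_succ {u : ℕ → ℝ} {d : ℝ} (hd : 0 ≤ d)
    (hu : ∀ j, d * u j ≤ u (j + 1)) (a t : ℕ) : d ^ t * u a ≤ u (a + t) := by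
  induction t with
  | zero => simp
  | succ t ih =>
    calc d ^ (t + 1) * u a = d * (d ^ t * u a) := by ring
      _ ≤ d * u (a + t) := by gcongr
      _ ≤ u (a + t + 1) := hu _

theorem exists_le_lt_add_of_le {k : ℕ → ℕ} {κ : ℕ} (hstep : ∀ j, k (j + 1) ≤ k j + κ)
    (hunb : ∀ K, ∃ j, K < k j) {m : ℕ} (hm : k 0 ≤ m) : ∃ j, k j ≤ m ∧ m < k j + κ := by
  classical
  have hex := hunb m
  obtain ⟨j, hj⟩ : ∃ j, Nat.find hex = j + 1 :=
    Nat.exists_eq_succ_of_ne_zero fun h => (Nat.find_spec hex).not_ge (h ▸ hm)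
  refine ⟨j, not_lt.1 (Nat.find_min hex (by omega)), ?_⟩
  exact (hj ▸ Nat.find_spec hex).trans_le (hstep j)

theorem Summable.of_comp_of_succ_le_add {f : ℕ → ℝ} (hf : 0 ≤ f) {k : ℕ → ℕ} {κ : ℕ} {C : ℝ}
    (hstep : ∀ j, k (j + 1) ≤ k j + κ) (hunb : ∀ K, ∃ j, K < k j)
    (hC : ∀ a t, t < κ → f (a + t) ≤ C * f a) (hsum : Summable (f ∘ k)) : Summable f := by
  choose J hJ using fun n => exists_le_lt_add_of_le hstep hunb (Nat.le_add_left (k 0) n)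
  have hfiber : ∀ b, (J ⁻¹' {b}).encard ≤ κ := fun b =>
    Set.encard_le_of_subset_Ico (a := k b - k 0) fun n (hn : J n = b) => by
      have := hJ n; subst hn; simp only [Set.mem_Ico]; omega
  have hbound : ∀ n, f (n + k 0) ≤ C * f (k (J n)) := fun n => by
    obtain ⟨hle, hlt⟩ := hJ n
    simpa [Nat.add_sub_cancel' hle] using hC (k (J n)) (n + k 0 - k (J n)) (by omega)
  refine (summable_nat_add_iff (k 0)).1 ?_
  exact .of_nonneg_of_le (fun n => hf _) hbound
    ((Summable.comp_of_encard_preimage_le (f := f ∘ k) (fun b => hf (k b)) hsum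
      hfiber).mul_left C)

section LeastIndex

variable {M : ℕ → ℝ} {k : ℕ → ℕ} (hk : ∀ j, IsLeast {m | (2 : ℝ) ^ j ≤ M m} (k j))
include hk

theorem monotone_of_isLeast_two_pow_le : Monotone k :=
  monotone_nat_of_le_succ fun j =>
    (hk j).2 (show (2 : ℝ) ^ j ≤ M (k (j + 1)) from
      (pow_le_pow_right₀ one_le_two j.le_succ).trans (hk (j + 1)).1)

theorem succ_le_add_of_isLeast_two_pow_le {κ : ℕ} (hM : ∀ m, 2 * M m ≤ M (m + κ)) (j : ℕ) :
    k (j + 1) ≤ k j + κ :=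
  (hk (j + 1)).2 <| show (2 : ℝ) ^ (j + 1) ≤ M (k j + κ) by
    rw [pow_succ']
    exact (mul_le_mul_of_nonneg_left (hk j).1 zero_le_two).trans (hM _)

theorem exists_lt_of_isLeast_two_pow_le (hM : Monotone M) (K : ℕ) : ∃ j, K < k j := by
  obtain ⟨j, hj⟩ := pow_unbounded_of_one_lt (M K) one_lt_two
  exact ⟨j, lt_of_not_ge fun hle => hj.not_ge ((hk j).1.trans (hM hle))⟩

theorem exists_lt_add_of_isLeast_two_pow_le (hM : Monotone M) {L : ℝ} (hL : 0 ≤ L)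
    (hML : ∀ m, M (m + 1) ≤ L * M m) : ∃ c, ∀ j, k j < k (j + c) := by
  obtain ⟨c, hc⟩ := pow_unbounded_of_one_lt (max L (M 0)) one_lt_two
  refine ⟨c, fun j => lt_of_not_ge fun hle => ?_⟩
  have hjc : (2 : ℝ) ^ (j + c) ≤ M (k j) := (hk (j + c)).1.trans (hM hle)
  have h2c : (2 : ℝ) ^ c ≤ 2 ^ (j + c) := pow_le_pow_right₀ one_le_two (Nat.le_add_left c j)
  rcases hkj : k j with _ | m
  · rw [hkj] at hjc
    linarith [le_max_right L (M 0)]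
  · have hm : M m < 2 ^ j := lt_of_not_ge fun h => by have := (hk j).2 h; omega
    rw [hkj] at hjc
    have : (2 : ℝ) ^ (j + c) < 2 ^ c * 2 ^ j :=
      calc (2 : ℝ) ^ (j + c) ≤ L * M m := hjc.trans (hML m)
        _ ≤ L * 2 ^ j := by gcongr
        _ < 2 ^ c * 2 ^ j := by gcongr; exact (le_max_left L (M 0)).trans_lt hc
    rw [pow_add, mul_comm] at this
    exact this.false

end LeastIndex

theorem two_zpow_sub_one_le_iff {x : ℝ} (j : ℕ) : (2 : ℝ) ^ ((j : ℤ) - 1) ≤ x ↔ 2 ^ j ≤ 2 * x := by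
  rw [zpow_sub₀ two_ne_zero, zpow_one, zpow_natCast, div_le_iff₀' two_pos]

theorem rpow_neg_add_le_of_mul_le_succ {σ : ℕ → ℝ} (hσ : ∀ j, 0 < σ j) {d : ℝ} (hd : 0 < d)
    (hσd : ∀ j, d * σ j ≤ σ (j + 1)) {r : ℝ} (hr : 0 ≤ r) (κ a t : ℕ) (ht : t < κ) :
    σ (a + t) ^ (-r) ≤ ((min d 1) ^ κ) ^ (-r) * σ a ^ (-r) := by
  have hmin : 0 < min d 1 := lt_min hd one_pos
  have hlow : (min d 1) ^ κ * σ a ≤ σ (a + t) :=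
    calc (min d 1) ^ κ * σ a ≤ (min d 1) ^ t * σ a :=
          mul_le_mul_of_nonneg_right (pow_le_pow_of_le_one hmin.le (min_le_right d 1) ht.le)
            (hσ a).le
      _ ≤ d ^ t * σ a := by gcongr; exacts [(hσ a).le, min_le_left d 1]
      _ ≤ σ (a + t) := pow_mul_le_of_mul_le_succ hd.le hσd a t
  rw [← Real.mul_rpow (by positivity) (hσ a).le]
  exact Real.rpow_le_rpow_of_nonpos (mul_pos (by positivity) (hσ a)) hlow (neg_nonpos.2 hr)

theorem stmt_12_general (σ : ℕ → ℝ) (hσ : ∀ j, 0 < σ j) (d0 d1 : ℝ)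
    (hd0 : 0 < d0)
    (hadmσ : ∀ j, d0 * σ j ≤ σ (j + 1) ∧ σ (j + 1) ≤ d1 * σ j)
    (N : ℕ → ℝ) (hN : ∀ j, 0 < N j) (lam0 lam1 : ℝ)
    (hlam0 : 1 < lam0) (hlam01 : lam0 ≤ lam1)
    (hadmN : ∀ j, lam0 * N j ≤ N (j + 1) ∧ N (j + 1) ≤ lam1 * N j)
    (κ0 : ℕ) (hκ0 : (2 : ℝ) ≤ lam0 ^ κ0)
    (k : ℕ → ℕ)
    (hk : ∀ j : ℕ, IsLeast {m : ℕ | (2 : ℝ) ^ ((j : ℤ) - 1) ≤ N (m + κ0)} (k j))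
    (r : ℝ) (hr : 0 < r) :
    Summable (fun j => σ j ^ (-r)) ↔ Summable (fun j => σ (k j) ^ (-r)) := by
  set M : ℕ → ℝ := fun m => 2 * N (m + κ0)
  have hkM : ∀ j, IsLeast {m | (2 : ℝ) ^ j ≤ M m} (k j) := fun j => by
    simpa only [two_zpow_sub_one_le_iff] using hk j
  have hNmono : Monotone N := monotone_nat_of_le_succ fun j =>
    (le_mul_of_one_le_left (hN j).le hlam0.le).trans (hadmN j).1
  have hMmono : Monotone M := fun a b hab =>
    mul_le_mul_of_nonneg_left (hNmono (Nat.add_le_add_right hab κ0)) zero_le_two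
  have hML : ∀ m, M (m + 1) ≤ lam1 * M m := fun m => by
    simp only [M, Nat.add_right_comm m 1 κ0]
    linarith [(hadmN (m + κ0)).2]
  have hM2 : ∀ m, 2 * M m ≤ M (m + κ0) := fun m => by
    have := pow_mul_le_of_mul_le_succ (by linarith) (fun j => (hadmN j).1) (m + κ0) κ0
    simp only [M]
    nlinarith [hN (m + κ0)]
  have hf : 0 ≤ fun j => σ j ^ (-r) := fun j => Real.rpow_nonneg (hσ j).le _
  constructor
  · obtain ⟨c, hc⟩ := exists_lt_add_of_isLeast_two_pow_le hkM hMmono (by linarith) hML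
    exact fun h => h.comp_of_encard_preimage_le hf
      ((monotone_of_isLeast_two_pow_le hkM).encard_preimage_singleton_le hc)
  · exact Summable.of_comp_of_succ_le_add hf (succ_le_add_of_isLeast_two_pow_le hkM hM2)
      (exists_lt_of_isLeast_two_pow_le hkM hMmono)
      (rpow_neg_add_le_of_mul_le_succ hσ hd0 (fun j => (hadmσ j).1) hr.le κ0)

/-- ∑ σ_j^{-r} < ∞ iff ∑ σ_{k(j)}^{-r} < ∞, for 0 < r < ∞. -/
theorem stmt_12 (σ : ℕ → ℝ) (hσ : ∀ j, 0 < σ j) (d0 d1 : ℝ)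
    (hd0 : 0 < d0) (hd01 : d0 ≤ d1)
    (hadmσ : ∀ j, d0 * σ j ≤ σ (j + 1) ∧ σ (j + 1) ≤ d1 * σ j)
    (N : ℕ → ℝ) (hN : ∀ j, 0 < N j) (lam0 lam1 : ℝ)
    (hlam0 : 1 < lam0) (hlam01 : lam0 ≤ lam1)
    (hadmN : ∀ j, lam0 * N j ≤ N (j + 1) ∧ N (j + 1) ≤ lam1 * N j)
    (κ0 : ℕ) (hκ0 : (2 : ℝ) ≤ lam0 ^ κ0)
    (k : ℕ → ℕ)
    (hk : ∀ j : ℕ, IsLeast {m : ℕ | (2 : ℝ) ^ ((j : ℤ) - 1) ≤ N (m + κ0)} (k j))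
    (r : ℝ) (hr : 0 < r) :
    Summable (fun j => σ j ^ (-r)) ↔ Summable (fun j => σ (k j) ^ (-r)) :=
  stmt_12_general σ hσ d0 d1 hd0 hadmσ N hN lam0 lam1 hlam0 hlam01 hadmN κ0 hκ0 k hk r hr
end
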